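/- The traction exerted by the Stokes flow on the surface of the sphere is, up to the ambient pressure, a constant vector: for every x ∈ ℝ³ with ‖x‖ = R, writing n = x/R for the outward unit normal and Du(x) for the Jacobian matrix of u at x, one has ν·(Du(x) + Du(x)ᵀ)·n − p(x)·n = −p∞·n + (3νv∞/(2R))·e₁. -/

import Mathlib

/-- The velocity field of the analytical Stokes flow past a sphere of radius `R` in a
uniform stream of speed `v∞` (Cartesian form). -/
noncomputable def stokesSphereVelocity (R v : ℝ) (x : EuclideanSpace ℝ (Fin 3)) :
    EuclideanSpace ℝ (Fin 3) :=
  v • EuclideanSpace.single (0 : Fin 3) (1 : ℝ) -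
    (3 * R * v / 4) • ((1 / ‖x‖) • EuclideanSpace.single (0 : Fin 3) (1 : ℝ) +
      (x 0 / ‖x‖ ^ 3) • x) -
    (R ^ 3 * v / 4) • ((1 / ‖x‖ ^ 3) • EuclideanSpace.single (0 : Fin 3) (1 : ℝ) -
      (3 * x 0 / ‖x‖ ^ 5) • x)

/-- The pressure field of the analytical Stokes flow past a sphere of radius `R` in a
uniform stream of speed `v∞`, kinematic viscosity `ν` and far-field pressure `pinf`. -/
noncomputable def stokesSpherePressure (R ν v pinf : ℝ) (x : EuclideanSpace ℝ (Fin 3)) : ℝ :=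
  pinf - (3 * ν * R * v / 2) * x 0 / ‖x‖ ^ 3

/-- The Jacobian matrix `Du(x)` of the Stokes velocity field at `x`. -/
noncomputable def stokesSphereJacobian (R v : ℝ) (x : EuclideanSpace ℝ (Fin 3)) :
    Matrix (Fin 3) (Fin 3) ℝ :=
  Matrix.of fun i j =>
    fderiv ℝ (stokesSphereVelocity R v) x (EuclideanSpace.single j 1) i

/-- The traction `σ·n = ν(Du + Duᵀ)·n − p·n` exerted by the Stokes flow on a surface with
unit normal `n`. -/
noncomputable def stokesSphereTraction (R ν v pinf : ℝ) (x : EuclideanSpace ℝ (Fin 3))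
    (n : Fin 3 → ℝ) : Fin 3 → ℝ :=
  ν • ((stokesSphereJacobian R v x + (stokesSphereJacobian R v x).transpose).mulVec n) -
    stokesSpherePressure R ν v pinf x • n

/-! Writing `r = ‖x‖` and `x₁ = x 0`, the velocity is `v e₁ + α(r) e₁ + β(r) x₁ x` with
`α(r) = -a/r - b/r³`, `β(r) = -a/r³ + 3b/r⁵`, `a = 3Rv/4`, `b = R³v/4`.
For a field of this shape and `n = x/r`,
`(Du + Duᵀ) n = (α' + rβ) e₁ + (α'/r² + 2β' + 3β/r) x₁ x`.
At `r = R` we have `β(R) = 0` and `α'(R) = 3v/(2R)`, while the coefficient of `x₁ x` is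
`-3v/(2R³)`; multiplied by `ν`, this is exactly cancelled by the non-constant part
`3νRv x₁/(2R³) · x/R` of `-p n`. -/

open scoped RealInnerProductSpace Matrix

section RadialAxialField

variable {E : Type*} [NormedAddCommGroup E] [InnerProductSpace ℝ E]

theorem hasFDerivAt_norm_of_ne_zero {x : E} (hx : x ≠ 0) :
    HasFDerivAt (‖·‖) (‖x‖⁻¹ • innerSL ℝ x) x := by
  have hsq : HasFDerivAt (fun y : E => ‖y‖ ^ 2) ((2 : ℕ) • innerSL ℝ x) x :=
    (hasStrictFDerivAt_norm_sq x).hasFDerivAt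
  have h := (Real.hasDerivAt_sqrt (by positivity : ‖x‖ ^ 2 ≠ 0)).comp_hasFDerivAt x hsq
  simp only [Function.comp_def, Real.sqrt_sq (norm_nonneg _)] at h
  refine h.congr_fderiv ?_
  ext h
  simp only [one_div, mul_inv_rev, smul_apply, coe_innerSL_apply, nsmul_eq_mul, Nat.cast_ofNat,
    smul_eq_mul]
  field_simp

def radialAxialField (α β : ℝ → ℝ) (e x : E) : E :=
  α ‖x‖ • e + (β ‖x‖ * ⟪e, x⟫) • x

variable {α β : ℝ → ℝ} {α' β' : ℝ} {e x : E}

theorem fderiv_radialAxialField_apply (hx : x ≠ 0) (hα : HasDerivAt α α' ‖x‖)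
    (hβ : HasDerivAt β β' ‖x‖) (h : E) :
    fderiv ℝ (radialAxialField α β e) x h =
      (α' / ‖x‖ * ⟪x, h⟫) • e + (β' / ‖x‖ * ⟪x, h⟫ * ⟪e, x⟫ + β ‖x‖ * ⟪e, h⟫) • x +
        (β ‖x‖ * ⟪e, x⟫) • h := by
  have hr := hasFDerivAt_norm_of_ne_zero hx
  have H : HasFDerivAt (radialAxialField α β e) _ x :=
    ((hα.comp_hasFDerivAt x hr).smul_const e).add
      (((hβ.comp_hasFDerivAt x hr).mul (innerSL ℝ e).hasFDerivAt).smul (hasFDerivAt_id x))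
  rw [H.fderiv]
  simp only [coe_innerSL_apply, Pi.mul_apply, Function.comp_apply, add_apply,
    ContinuousLinearMap.smulRight_apply, smul_apply, smul_eq_mul,
    ContinuousLinearMap.id_apply]
  module

theorem fderiv_radialAxialField_normal (hx : x ≠ 0) (hα : HasDerivAt α α' ‖x‖)
    (hβ : HasDerivAt β β' ‖x‖) :
    fderiv ℝ (radialAxialField α β e) x (‖x‖⁻¹ • x) =
      α' • e + ((β' + 2 * β ‖x‖ / ‖x‖) * ⟪e, x⟫) • x := by
  have hr : ‖x‖ ≠ 0 := norm_ne_zero_iff.2 hx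
  rw [fderiv_radialAxialField_apply hx hα hβ]
  simp only [inner_smul_right, real_inner_self_eq_norm_sq]
  match_scalars
  · field_simp
  · field_simp
    ring

theorem inner_fderiv_radialAxialField_normal (hx : x ≠ 0) (hα : HasDerivAt α α' ‖x‖)
    (hβ : HasDerivAt β β' ‖x‖) (h : E) :
    ⟪fderiv ℝ (radialAxialField α β e) x h, ‖x‖⁻¹ • x⟫ =
      ⟪h, ((α' / ‖x‖ ^ 2 + β' + β ‖x‖ / ‖x‖) * ⟪e, x⟫) • x + (β ‖x‖ * ‖x‖) • e⟫ := by
  have hr : ‖x‖ ≠ 0 := norm_ne_zero_iff.2 hx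
  rw [fderiv_radialAxialField_apply hx hα hβ]
  simp only [inner_add_left, inner_add_right, inner_smul_left, inner_smul_right,
    real_inner_self_eq_norm_sq, real_inner_comm, RCLike.conj_to_real]
  field_simp
  ring

end RadialAxialField

theorem add_transpose_mulVec_eq_of_inner_eq {ι : Type*} [Fintype ι] [DecidableEq ι]
    {M : Matrix ι ι ℝ} {L : EuclideanSpace ℝ ι →L[ℝ] EuclideanSpace ℝ ι}
    (hM : ∀ i j, M i j = L (EuclideanSpace.single j 1) i) {n w : EuclideanSpace ℝ ι}
    (hw : ∀ h, ⟪L h, n⟫ = ⟪h, w⟫) :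
    (M + Mᵀ) *ᵥ WithLp.ofLp n = WithLp.ofLp (L n + w) := by
  ext i
  have hn : n = ∑ j, n j • EuclideanSpace.single j (1 : ℝ) := by
    simpa using ((EuclideanSpace.basisFun ι ℝ).toBasis.sum_repr n).symm
  have hLn : (M *ᵥ n) i = L n i := by
    conv_rhs => rw [hn]
    simp only [Matrix.mulVec, dotProduct, hM, mul_comm, map_sum, map_smul, WithLp.ofLp_sum,
      WithLp.ofLp_smul, Finset.sum_apply, Pi.smul_apply, smul_eq_mul]
  have hw_i : (Mᵀ *ᵥ n) i = w i := by
    have := hw (EuclideanSpace.single i 1)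
    simp only [PiLp.inner_apply, RCLike.inner_apply, Real.ringHom_apply, PiLp.single_apply,
      MonoidWithZeroHom.map_ite_one_zero, mul_ite, mul_one, mul_zero, Finset.sum_ite_eq',
      Finset.mem_univ, ↓reduceIte] at this
    simp only [Matrix.mulVec, dotProduct, Matrix.transpose_apply, hM, mul_comm, ← this]
  simp [Matrix.add_mulVec, hLn, hw_i]

theorem hasDerivAt_const_div_pow (c : ℝ) (k : ℕ) {r : ℝ} (hr : r ≠ 0) :
    HasDerivAt (fun s => c / s ^ k) (-(k * c) / r ^ (k + 1)) r := by
  refine ((hasDerivAt_const r c).div (hasDerivAt_pow k r) (pow_ne_zero k hr)).congr_deriv ?_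
  rcases k with _ | k
  · simp
  · rw [Nat.add_sub_cancel]
    field_simp
    ring

noncomputable def stokesSphereAxialCoeff (R v r : ℝ) : ℝ :=
  -(3 * R * v / 4) / r - (R ^ 3 * v / 4) / r ^ 3

noncomputable def stokesSphereRadialCoeff (R v r : ℝ) : ℝ :=
  -(3 * R * v / 4) / r ^ 3 + 3 * (R ^ 3 * v / 4) / r ^ 5

local notation "e₁" => EuclideanSpace.single (0 : Fin 3) (1 : ℝ)

theorem stokesSphereVelocity_eq (R v : ℝ) :
    stokesSphereVelocity R v = fun x => v • e₁ +
      radialAxialField (stokesSphereAxialCoeff R v) (stokesSphereRadialCoeff R v) e₁ x := by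
  ext x i
  simp only [stokesSphereVelocity, radialAxialField, stokesSphereAxialCoeff,
    stokesSphereRadialCoeff, EuclideanSpace.inner_single_left, PiLp.add_apply, PiLp.sub_apply,
    PiLp.smul_apply, PiLp.single_apply, smul_eq_mul, smul_add, Real.ringHom_apply, one_mul]
  split_ifs <;> ring

theorem hasDerivAt_stokesSphereAxialCoeff (R v : ℝ) {r : ℝ} (hr : r ≠ 0) :
    HasDerivAt (stokesSphereAxialCoeff R v)
      ((3 * R * v / 4) / r ^ 2 + 3 * (R ^ 3 * v / 4) / r ^ 4) r := by
  have h := (hasDerivAt_const_div_pow (-(3 * R * v / 4)) 1 hr).sub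
    (hasDerivAt_const_div_pow (R ^ 3 * v / 4) 3 hr)
  simp only [pow_one] at h
  exact h.congr_deriv (by push_cast; ring)

theorem hasDerivAt_stokesSphereRadialCoeff (R v : ℝ) {r : ℝ} (hr : r ≠ 0) :
    HasDerivAt (stokesSphereRadialCoeff R v)
      (3 * (3 * R * v / 4) / r ^ 4 - 15 * (R ^ 3 * v / 4) / r ^ 6) r :=
  ((hasDerivAt_const_div_pow (-(3 * R * v / 4)) 3 hr).add
    (hasDerivAt_const_div_pow (3 * (R ^ 3 * v / 4)) 5 hr)).congr_deriv (by push_cast; ring)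

theorem stokesSphereJacobian_add_transpose_mulVec (R v : ℝ) (hR : R ≠ 0)
    {x : EuclideanSpace ℝ (Fin 3)} (hx : ‖x‖ = R) :
    (stokesSphereJacobian R v x + (stokesSphereJacobian R v x)ᵀ) *ᵥ WithLp.ofLp (R⁻¹ • x) =
      WithLp.ofLp ((3 * v / (2 * R)) • e₁ - (3 * v / (2 * R ^ 3) * x 0) • x) := by
  have hr : ‖x‖ ≠ 0 := hx ▸ hR
  have hx0 : x ≠ 0 := norm_ne_zero_iff.1 hr
  have hα := hasDerivAt_stokesSphereAxialCoeff R v hr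
  have hβ := hasDerivAt_stokesSphereRadialCoeff R v hr
  have hL : fderiv ℝ (stokesSphereVelocity R v) x =
      fderiv ℝ (radialAxialField (stokesSphereAxialCoeff R v) (stokesSphereRadialCoeff R v) e₁)
        x := by
    rw [stokesSphereVelocity_eq, fderiv_const_add]
  have hw := inner_fderiv_radialAxialField_normal (e := e₁) hx0 hα hβ
  rw [← hL] at hw
  rw [show R⁻¹ = ‖x‖⁻¹ by rw [hx],
    add_transpose_mulVec_eq_of_inner_eq (M := stokesSphereJacobian R v x) (fun _ _ => rfl) hw, hL,
    fderiv_radialAxialField_normal hx0 hα hβ]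
  simp only [stokesSphereRadialCoeff, EuclideanSpace.inner_single_left, map_one, one_mul, hx]
  congr 1
  match_scalars
  · field_simp
    ring
  · field_simp
    ring

theorem stokesSphere_traction_const_general (R ν v pinf : ℝ) (hR : 0 < R)
    (x : EuclideanSpace ℝ (Fin 3)) (hx : ‖x‖ = R) :
    stokesSphereTraction R ν v pinf x (fun i => x i / R) =
      (-pinf) • (fun i => x i / R) + (3 * ν * v / (2 * R)) • ![1, 0, 0] := by
  have hn : (fun i => x i / R) = WithLp.ofLp (R⁻¹ • x) := by
    ext i
    simp [div_eq_inv_mul]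
  rw [stokesSphereTraction, stokesSpherePressure, hn,
    stokesSphereJacobian_add_transpose_mulVec R v hR.ne' hx]
  have he : ![1, 0, 0] = WithLp.ofLp e₁ := by
    ext i
    fin_cases i <;> simp
  rw [he, hx]
  simp only [WithLp.ofLp_sub, WithLp.ofLp_smul]
  match_scalars
  · ring
  · field_simp
    ring

/-- The traction exerted by the Stokes flow on the surface of the sphere is, up to the
ambient pressure, a constant vector: for `‖x‖ = R` with outward unit normal `n = x/R`,
`ν(Du(x) + Du(x)ᵀ)·n − p(x)·n = −p∞·n + (3νv∞/(2R))·e₁`. -/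
theorem stokesSphere_traction_const (R ν v pinf : ℝ) (hR : 0 < R) (hν : 0 < ν)
    (x : EuclideanSpace ℝ (Fin 3)) (hx : ‖x‖ = R) :
    stokesSphereTraction R ν v pinf x (fun i => x i / R) =
      (-pinf) • (fun i => x i / R) + (3 * ν * v / (2 * R)) • ![1, 0, 0] :=
  stokesSphere_traction_const_general R ν v pinf hR x hx
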